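/- Let f : ℝ → ℝ satisfy f(0) = 0 and be differentiable everywhere with f'(t) = (1 + 2 f(t)²)^{-1/2} for all t ∈ ℝ. Then for every t ∈ ℝ one has (1/2) f(t)² ≤ f(t) · t · (1 + 2 f(t)²)^{-1/2} ≤ f(t)², i.e., (1/2) f(t)² ≤ f(t) f'(t) t ≤ f(t)². -/

import Mathlib

/-!
With `S = √(1 + 2 f²)` the ODE reads `f' = 1 / S`, and `g = f S` has `g' = 1 + 2 f² / S² ∈ [1, 2]`,
so `g - t` and `t - g / 2` are monotone and vanish at `0`, as does `f`. Hence `f (g - t) ≥ 0` and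
`f (t - g / 2) ≥ 0`; dividing by `S` gives the two inequalities.
-/

open Real

theorem Monotone.mul_nonneg_of_eq_zero {α β : Type*} [LinearOrder α] [Ring β] [LinearOrder β]
    [IsStrictOrderedRing β] {a b : α → β} (ha : Monotone a) (hb : Monotone b) {x₀ : α}
    (ha₀ : a x₀ = 0) (hb₀ : b x₀ = 0) (x : α) : 0 ≤ a x * b x := by
  rcases le_total x₀ x with hx | hx
  · exact mul_nonneg (ha₀ ▸ ha hx) (hb₀ ▸ hb hx)
  · exact mul_nonneg_of_nonpos_of_nonpos (ha₀ ▸ ha hx) (hb₀ ▸ hb hx)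

theorem rpow_neg_one_half_eq_inv_sqrt {x : ℝ} (hx : 0 ≤ x) : x ^ (-(1 / 2 : ℝ)) = (√x)⁻¹ := by
  rw [rpow_neg hx, ← sqrt_eq_rpow]

theorem half_sq_le_mul_mul_inv_and_le_sq {x t S : ℝ} (hS : 0 < S)
    (hlower : 0 ≤ x * (t - x * S / 2)) (hupper : 0 ≤ x * (x * S - t)) :
    1 / 2 * x ^ 2 ≤ x * t * S⁻¹ ∧ x * t * S⁻¹ ≤ x ^ 2 := by
  constructor
  · calc 1 / 2 * x ^ 2 ≤ 1 / 2 * x ^ 2 + x * (t - x * S / 2) / S := by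
          have := div_nonneg hlower hS.le
          linarith
      _ = x * t * S⁻¹ := by field_simp; ring
  · calc x * t * S⁻¹ ≤ x * t * S⁻¹ + x * (x * S - t) / S := by
          have := div_nonneg hupper hS.le
          linarith
      _ = x ^ 2 := by field_simp; ring

section DualChangeOfVariables

variable {f : ℝ → ℝ}

theorem hasDerivAt_mul_sqrt_one_add_two_sq {t : ℝ} (hf : HasDerivAt f (√(1 + 2 * f t ^ 2))⁻¹ t) :
    HasDerivAt (fun s => f s * √(1 + 2 * f s ^ 2)) (1 + 2 * f t ^ 2 / (1 + 2 * f t ^ 2)) t := by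
  have hpos : 0 < 1 + 2 * f t ^ 2 := by positivity
  have hS : √(1 + 2 * f t ^ 2) ≠ 0 := (sqrt_pos.2 hpos).ne'
  refine (hf.fun_mul ((((hf.fun_pow 2).const_mul 2).const_add 1).sqrt hpos.ne')).congr_deriv ?_
  field_simp
  rw [sq_sqrt hpos.le]
  ring

theorem monotone_mul_sqrt_one_add_two_sq_sub_id
    (hf : ∀ t, HasDerivAt f (√(1 + 2 * f t ^ 2))⁻¹ t) :
    Monotone fun s => f s * √(1 + 2 * f s ^ 2) - s :=
  monotone_of_hasDerivAt_nonneg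
    (fun s => (hasDerivAt_mul_sqrt_one_add_two_sq (hf s)).sub (hasDerivAt_id s)) fun s => by
      simp only [Pi.zero_apply, add_sub_cancel_left]
      positivity

theorem monotone_id_sub_mul_sqrt_one_add_two_sq_div_two
    (hf : ∀ t, HasDerivAt f (√(1 + 2 * f t ^ 2))⁻¹ t) :
    Monotone fun s => s - f s * √(1 + 2 * f s ^ 2) / 2 :=
  monotone_of_hasDerivAt_nonneg
    (fun s => (hasDerivAt_id s).sub ((hasDerivAt_mul_sqrt_one_add_two_sq (hf s)).div_const 2))
    fun s => by
      have hpos : 0 < 1 + 2 * f s ^ 2 := by positivity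
      simp only [Pi.zero_apply, sub_nonneg]
      rw [div_le_one two_pos, ← le_sub_iff_add_le', div_le_iff₀ hpos]
      linarith

end DualChangeOfVariables

/-- Lemma 2.1 (5): `(1/2) f(t)² ≤ f(t) f'(t) t ≤ f(t)²` for all `t`,
where `f'(t) = (1 + 2 f(t)²)^(-1/2)`. -/
theorem dual_change_of_variables_ffprime (f : ℝ → ℝ)
    (hf0 : f 0 = 0)
    (hf : ∀ t : ℝ, HasDerivAt f ((1 + 2 * (f t) ^ 2) ^ (-(1 / 2 : ℝ))) t) :
    ∀ t : ℝ,
      (1 / 2) * (f t) ^ 2 ≤ f t * t * (1 + 2 * (f t) ^ 2) ^ (-(1 / 2 : ℝ)) ∧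
      f t * t * (1 + 2 * (f t) ^ 2) ^ (-(1 / 2 : ℝ)) ≤ (f t) ^ 2 := by
  have hpos (s : ℝ) : 0 < 1 + 2 * f s ^ 2 := by positivity
  have hrpow (s : ℝ) := rpow_neg_one_half_eq_inv_sqrt (hpos s).le
  have hf' (s : ℝ) : HasDerivAt f (√(1 + 2 * f s ^ 2))⁻¹ s := hrpow s ▸ hf s
  have hf_mono : Monotone f :=
    monotone_of_hasDerivAt_nonneg hf' fun s => inv_nonneg.2 (sqrt_nonneg _)
  intro t
  rw [hrpow t]
  exact half_sq_le_mul_mul_inv_and_le_sq (sqrt_pos.2 (hpos t))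
    (hf_mono.mul_nonneg_of_eq_zero (monotone_id_sub_mul_sqrt_one_add_two_sq_div_two hf') hf0
      (by simp [hf0]) t)
    (hf_mono.mul_nonneg_of_eq_zero (monotone_mul_sqrt_one_add_two_sq_sub_id hf') hf0
      (by simp [hf0]) t)
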